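/- Assume the off-diagonal entries of L_X and of L_Y are nonpositive and that the characteristic polynomial of L has integer coefficients. Then there exist a real τ > 0 and a complex number γ with |γ| = 1 such that exp(iτL) = γ·I if and only if every eigenvalue of L is an integer. -/

import Mathlib

open Matrix Complex

/-- Transition matrix `exp(itM)` of the continuous quantum walk whose Hamiltonian is the
real symmetric matrix `M` (the matrix exponential is taken over `ℂ`). -/
noncomputable def transU {N : Type*} [Fintype N] [DecidableEq N]
    (M : Matrix N N ℝ) (t : ℝ) : Matrix N N ℂ :=
  NormedSpace.exp ((Complex.I * (t : ℂ)) • M.map (fun x : ℝ => (x : ℂ)))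

/-- Laplacian matrix of the join `X ∨ Y` of two weighted graphs with Laplacian
matrices `LX` and `LY`. -/
noncomputable def joinL (m n : ℕ) (LX : Matrix (Fin m) (Fin m) ℝ)
    (LY : Matrix (Fin n) (Fin n) ℝ) :
    Matrix (Fin m ⊕ Fin n) (Fin m ⊕ Fin n) ℝ :=
  Matrix.fromBlocks (LX + (n : ℝ) • (1 : Matrix (Fin m) (Fin m) ℝ))
    (-(Matrix.of fun _ _ => (1 : ℝ)))
    (-(Matrix.of fun _ _ => (1 : ℝ)))
    (LY + (m : ℝ) • (1 : Matrix (Fin n) (Fin n) ℝ))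

/-- Adjacency matrix of the join `X ∨ Y` of two weighted graphs with adjacency
matrices `AX` and `AY`. -/
noncomputable def joinA (m n : ℕ) (AX : Matrix (Fin m) (Fin m) ℝ)
    (AY : Matrix (Fin n) (Fin n) ℝ) :
    Matrix (Fin m ⊕ Fin n) (Fin m ⊕ Fin n) ℝ :=
  Matrix.fromBlocks AX (Matrix.of fun _ _ => (1 : ℝ))
    (Matrix.of fun _ _ => (1 : ℝ)) AY

/-- `lam` is an eigenvalue of the matrix `M`. -/
def IsEigenvalue {N : Type*} [Fintype N] (M : Matrix N N ℝ) (lam : ℝ) : Prop :=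
  ∃ w : N → ℝ, w ≠ 0 ∧ M.mulVec w = lam • w

/-- The eigenvalue support `σ_u(M)` of the vertex `u`: all eigenvalues `lam` of `M` having
an eigenvector `w` with `w u ≠ 0`. -/
def eigSupport {N : Type*} [Fintype N] (M : Matrix N N ℝ) (u : N) : Set ℝ :=
  {lam | ∃ w : N → ℝ, w ≠ 0 ∧ M.mulVec w = lam • w ∧ w u ≠ 0}

/-- Vertices `u` and `v` are strongly cospectral with respect to `M`: for each eigenvalue,
either all eigenvectors have equal `u`,`v` entries, or all have opposite `u`,`v` entries. -/
def StronglyCospectral {N : Type*} [Fintype N] (M : Matrix N N ℝ) (u v : N) : Prop :=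
  ∀ lam : ℝ, IsEigenvalue M lam →
    (∀ w : N → ℝ, M.mulVec w = lam • w → w u = w v) ∨
    (∀ w : N → ℝ, M.mulVec w = lam • w → w u = -(w v))

/-- `σ_{uv}^-(M)`: eigenvalues in the support of `u` all of whose eigenvectors `w`
satisfy `w u = - w v`. -/
def sigmaMinus {N : Type*} [Fintype N] (M : Matrix N N ℝ) (u v : N) : Set ℝ :=
  {lam | lam ∈ eigSupport M u ∧ ∀ w : N → ℝ, M.mulVec w = lam • w → w u = -(w v)}

/-- The vertex `u` is periodic with respect to `M`. -/
noncomputable def PeriodicAt {N : Type*} [Fintype N] [DecidableEq N]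
    (M : Matrix N N ℝ) (u : N) : Prop :=
  ∃ τ : ℝ, 0 < τ ∧ ‖transU M τ u u‖ = 1

/-- Perfect state transfer occurs between vertices `u` and `v` with respect to `M`. -/
noncomputable def HasPST {N : Type*} [Fintype N] [DecidableEq N]
    (M : Matrix N N ℝ) (u v : N) : Prop :=
  ∃ τ : ℝ, 0 < τ ∧ ‖transU M τ u v‖ = 1

/-! The join Laplacian `L` has eigenvalue `0` (all-ones vector) and `m + n` (the vector equal to
`n` on `X` and `-m` on `Y`). If `exp(iτL) = γ I`, the eigenvalue `0` forces `γ = 1`, so `τλ ∈ 2πℤ`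
for every eigenvalue `λ`; comparing with `λ = m + n` shows that every eigenvalue is rational. It is
also a root of the monic integer characteristic polynomial, hence a rational algebraic integer,
hence an integer. Conversely, integer eigenvalues give `exp(2πiL) = I`. -/

theorem Units.conj_eq_smul_one_iff {K A : Type*} [CommSemiring K] [Semiring A] [Algebra K A]
    (u : Aˣ) (a : A) (c : K) : (u : A) * a * ↑u⁻¹ = c • 1 ↔ a = c • 1 := by
  constructor
  · intro h
    calc a = ↑u⁻¹ * ((u : A) * a * ↑u⁻¹) * u := by simp [mul_assoc]
      _ = c • 1 := by simp [h]
  · rintro rfl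
    simp

theorem Complex.exp_I_mul_ofReal_eq_one_iff {x : ℝ} :
    Complex.exp (I * x) = 1 ↔ ∃ k : ℤ, x = k * (2 * Real.pi) := by
  rw [mul_comm, ← Circle.coe_exp, ← Circle.coe_one, Circle.coe_inj, Circle.exp_eq_one]

theorem Real.exists_int_eq_of_isIntegral_of_eq_ratCast {x : ℝ} (hx : IsIntegral ℤ x) {q : ℚ}
    (hq : x = q) : ∃ z : ℤ, x = z := by
  subst hq
  obtain ⟨z, hz⟩ := IsIntegrallyClosed.isIntegral_iff.1
    ((isIntegral_algebraMap_iff (algebraMap ℚ ℝ).injective).1 hx)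
  exact ⟨z, by simp [← hz]⟩

theorem mulVec_const_eq_zero {ι α : Type*} [Fintype ι] [NonUnitalNonAssocSemiring α]
    {A : Matrix ι ι α} (hA : ∀ i, ∑ j, A i j = 0) (c : α) : A *ᵥ (fun _ => c) = 0 := by
  ext i
  simp [mulVec, dotProduct, ← Finset.sum_mul, hA i]

section Spectral

variable {N : Type*} [Fintype N] [DecidableEq N]

theorem transU_eq_units_conj_diagonal {M : Matrix N N ℝ} (hM : M.IsHermitian) :
    ∃ u : (Matrix N N ℂ)ˣ, ∀ τ : ℝ, transU M τ = (u : Matrix N N ℂ) *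
      diagonal (fun i => Complex.exp (I * τ * hM.eigenvalues i)) * (↑u⁻¹ : Matrix N N ℂ) := by
  let u : (Matrix N N ℂ)ˣ := Units.map (ofRealHom.mapMatrix : Matrix N N ℝ →+* _)
    (Unitary.toUnits hM.eigenvectorUnitary)
  refine ⟨u, fun τ => ?_⟩
  have hconj : M.map ofRealHom =
      (u : Matrix N N ℂ) * diagonal (fun i => (hM.eigenvalues i : ℂ)) * (↑u⁻¹ : Matrix N N ℂ) := by
    conv_lhs => rw [hM.spectral_theorem, Unitary.conjStarAlgAut_apply]
    simp [u, Matrix.map_mul, Unitary.toUnits]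
  unfold transU
  rw [show M.map (fun x : ℝ => (x : ℂ)) = M.map ofRealHom from rfl, hconj, ← smul_mul_assoc,
    ← mul_smul_comm, Matrix.exp_units_conj, ← diagonal_smul, Matrix.exp_diagonal, Pi.exp_def]
  simp only [Pi.smul_apply, smul_eq_mul, ← Complex.exp_eq_exp_ℂ]

theorem isEigenvalue_iff_mem_spectrum (M : Matrix N N ℝ) (μ : ℝ) :
    IsEigenvalue M μ ↔ μ ∈ spectrum ℝ M := by
  rw [← Matrix.spectrum_toLin', ← Module.End.hasEigenvalue_iff_mem_spectrum,
    Module.End.hasEigenvalue_iff, Submodule.ne_bot_iff]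
  simp only [Module.End.mem_eigenspace_iff, Matrix.toLin'_apply, IsEigenvalue]
  exact ⟨fun ⟨w, hw0, hw⟩ => ⟨w, hw, hw0⟩, fun ⟨w, hw, hw0⟩ => ⟨w, hw0, hw⟩⟩

theorem transU_eq_smul_one_iff {M : Matrix N N ℝ} (hM : M.IsSymm) (τ : ℝ) (γ : ℂ) :
    transU M τ = γ • 1 ↔ ∀ μ, IsEigenvalue M μ → Complex.exp (I * τ * μ) = γ := by
  have hH : M.IsHermitian := isHermitian_iff_isSymm.2 hM
  obtain ⟨u, hu⟩ := transU_eq_units_conj_diagonal hH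
  rw [hu τ, Units.conj_eq_smul_one_iff, ← diagonal_one, ← diagonal_smul, diagonal_eq_diagonal_iff]
  simp [isEigenvalue_iff_mem_spectrum, hH.spectrum_real_eq_range_eigenvalues]

theorem isIntegral_of_isEigenvalue {M : Matrix N N ℝ}
    (hchar : ∀ i, ∃ z : ℤ, M.charpoly.coeff i = z) {μ : ℝ} (hμ : IsEigenvalue M μ) :
    IsIntegral ℤ μ := by
  have hlifts : M.charpoly ∈ Polynomial.lifts (algebraMap ℤ ℝ) :=
    (Polynomial.lifts_iff_coeff_lifts _).2 fun i => by
      obtain ⟨z, hz⟩ := hchar i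
      exact ⟨z, by simp [hz]⟩
  obtain ⟨p, hp, -, hp_monic⟩ :=
    Polynomial.lifts_and_natDegree_eq_and_monic hlifts M.charpoly_monic
  refine ⟨p, hp_monic, ?_⟩
  rw [Polynomial.eval₂_eq_eval_map, hp]
  exact Matrix.mem_spectrum_iff_isRoot_charpoly.1 ((isEigenvalue_iff_mem_spectrum M μ).1 hμ)

def IsPeriodic (M : Matrix N N ℝ) : Prop :=
  ∃ τ : ℝ, 0 < τ ∧ ∃ γ : ℂ, ‖γ‖ = 1 ∧ transU M τ = γ • 1

theorem isPeriodic_iff_forall_isEigenvalue_int {M : Matrix N N ℝ} (hM : M.IsSymm)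
    (hchar : ∀ i, ∃ z : ℤ, M.charpoly.coeff i = z) (h0 : IsEigenvalue M 0) {d : ℤ} (hd : d ≠ 0)
    (hdM : IsEigenvalue M d) :
    IsPeriodic M ↔ ∀ μ, IsEigenvalue M μ → ∃ z : ℤ, μ = z := by
  simp only [IsPeriodic, transU_eq_smul_one_iff hM]
  constructor
  · rintro ⟨τ, hτ, γ, -, hγ⟩
    have hγ1 : γ = 1 := by simpa using (hγ 0 h0).symm
    have hturn : ∀ μ, IsEigenvalue M μ → ∃ k : ℤ, τ * μ = k * (2 * Real.pi) := by
      intro μ hμ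
      rw [← Complex.exp_I_mul_ofReal_eq_one_iff, ← hγ1, ← hγ μ hμ]
      push_cast
      ring_nf
    obtain ⟨k, hk⟩ := hturn d hdM
    have hk0 : (k : ℝ) ≠ 0 := by
      rintro hk0
      rw [hk0, zero_mul] at hk
      exact hd (by exact_mod_cast (mul_eq_zero.1 hk).resolve_left hτ.ne')
    intro μ hμ
    obtain ⟨j, hj⟩ := hturn μ hμ
    -- `τμ = 2πj` and `τd = 2πk` give `μ = dj/k`
    refine Real.exists_int_eq_of_isIntegral_of_eq_ratCast (isIntegral_of_isEigenvalue hchar hμ)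
      (q := d * j / k) ?_
    push_cast
    field_simp
    apply mul_left_cancel₀ hτ.ne'
    linear_combination (k : ℝ) * hj - (j : ℝ) * hk
  · intro hint
    refine ⟨2 * Real.pi, by positivity, 1, norm_one, fun μ hμ => ?_⟩
    obtain ⟨z, rfl⟩ := hint μ hμ
    rw [show I * ((2 * Real.pi : ℝ) : ℂ) * (z : ℝ) = I * ((z * (2 * Real.pi) : ℝ) : ℂ) by
      push_cast; ring]
    exact Complex.exp_I_mul_ofReal_eq_one_iff.2 ⟨z, rfl⟩

end Spectral

section Join

variable {m n : ℕ} {LX : Matrix (Fin m) (Fin m) ℝ} {LY : Matrix (Fin n) (Fin n) ℝ}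

theorem joinL_isSymm (hX : LX.IsSymm) (hY : LY.IsSymm) : (joinL m n LX LY).IsSymm :=
  IsSymm.fromBlocks (hX.add (isSymm_one.smul _)) (by ext; rfl) (hY.add (isSymm_one.smul _))

theorem joinL_mulVec_elim_const (hX : ∀ i, ∑ j, LX i j = 0) (hY : ∀ i, ∑ j, LY i j = 0)
    (a b : ℝ) :
    joinL m n LX LY *ᵥ Sum.elim (fun _ => a) (fun _ => b) =
      Sum.elim (fun _ => n * (a - b)) (fun _ => m * (b - a)) := by
  rw [joinL, fromBlocks_mulVec, Sum.elim_comp_inl, Sum.elim_comp_inr, add_mulVec, add_mulVec,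
    mulVec_const_eq_zero hX, mulVec_const_eq_zero hY]
  ext (i | i) <;> simp [smul_mulVec, mulVec, dotProduct] <;> ring

theorem isEigenvalue_joinL_zero (hm : 1 ≤ m) (hX : ∀ i, ∑ j, LX i j = 0)
    (hY : ∀ i, ∑ j, LY i j = 0) : IsEigenvalue (joinL m n LX LY) 0 := by
  refine ⟨Sum.elim (fun _ => 1) (fun _ => 1), fun h => ?_, ?_⟩
  · simpa using congrFun h (Sum.inl ⟨0, hm⟩)
  · rw [joinL_mulVec_elim_const hX hY, zero_smul]
    ext (i | i) <;> simp

theorem isEigenvalue_joinL_add (hm : 1 ≤ m) (hn : 1 ≤ n) (hX : ∀ i, ∑ j, LX i j = 0)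
    (hY : ∀ i, ∑ j, LY i j = 0) : IsEigenvalue (joinL m n LX LY) (m + n) := by
  refine ⟨Sum.elim (fun _ => (n : ℝ)) (fun _ => -(m : ℝ)), fun h => ?_, ?_⟩
  · have := congrFun h (Sum.inl ⟨0, hm⟩)
    simp only [Sum.elim_inl, Pi.zero_apply, Nat.cast_eq_zero] at this
    omega
  · rw [joinL_mulVec_elim_const hX hY]
    ext (i | i) <;> simp <;> ring

end Join

theorem stmt8_general (m n : ℕ) (hm : 1 ≤ m) (hn : 1 ≤ n)
    (LX : Matrix (Fin m) (Fin m) ℝ) (LY : Matrix (Fin n) (Fin n) ℝ)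
    (hLXsymm : LX.IsSymm) (hLXrow : ∀ i, ∑ j, LX i j = 0)
    (hLYsymm : LY.IsSymm) (hLYrow : ∀ i, ∑ j, LY i j = 0)
    (hcharpoly : ∀ i, ∃ z : ℤ, (Matrix.charpoly (joinL m n LX LY)).coeff i = (z : ℝ)) :
    (∃ τ : ℝ, 0 < τ ∧ ∃ γ : ℂ, ‖γ‖ = 1 ∧
        transU (joinL m n LX LY) τ = γ • (1 : Matrix (Fin m ⊕ Fin n) (Fin m ⊕ Fin n) ℂ)) ↔
      ∀ lam : ℝ, IsEigenvalue (joinL m n LX LY) lam → ∃ z : ℤ, lam = (z : ℝ) :=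
  isPeriodic_iff_forall_isEigenvalue_int (joinL_isSymm hLXsymm hLYsymm) hcharpoly
    (isEigenvalue_joinL_zero hm hLXrow hLYrow) (d := m + n) (by omega)
    (by exact_mod_cast isEigenvalue_joinL_add hm hn hLXrow hLYrow)

theorem stmt8 (m n : ℕ) (hm : 1 ≤ m) (hn : 1 ≤ n)
    (LX : Matrix (Fin m) (Fin m) ℝ) (LY : Matrix (Fin n) (Fin n) ℝ)
    (hLXsymm : LX.IsSymm) (hLXrow : ∀ i, ∑ j, LX i j = 0)
    (hLXoffdiag : ∀ i j, i ≠ j → LX i j ≤ 0)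
    (hLYsymm : LY.IsSymm) (hLYrow : ∀ i, ∑ j, LY i j = 0)
    (hLYoffdiag : ∀ i j, i ≠ j → LY i j ≤ 0)
    (hcharpoly : ∀ i, ∃ z : ℤ, (Matrix.charpoly (joinL m n LX LY)).coeff i = (z : ℝ)) :
    (∃ τ : ℝ, 0 < τ ∧ ∃ γ : ℂ, ‖γ‖ = 1 ∧
        transU (joinL m n LX LY) τ = γ • (1 : Matrix (Fin m ⊕ Fin n) (Fin m ⊕ Fin n) ℂ)) ↔
      ∀ lam : ℝ, IsEigenvalue (joinL m n LX LY) lam → ∃ z : ℤ, lam = (z : ℝ) :=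
  stmt8_general m n hm hn LX LY hLXsymm hLXrow hLYsymm hLYrow hcharpoly
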